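/- Let v = (v1,v2,v3) ∈ ℝ³, θ ∈ ℝ, and let Q(θ) := (1/√2)·( v1·(cos 2θ·L5 + sin 2θ·L2) + v2·L4 + v3·(cos θ·L1 + sin θ·L3) ). Let R_θ be the rotation matrix [[cos θ, −sin θ, 0],[sin θ, cos θ, 0],[0,0,1]]. Then Q(θ) = R_θ · Q(0) · R_θᵀ. In particular, the eigenvalues of Q(θ) do not depend on θ. -/
import Mathlib

open Matrix Real Polynomial

noncomputable def L1 : Matrix (Fin 3) (Fin 3) ℝ :=
  (1 / Real.sqrt 2) • !![0, 0, 1; 0, 0, 0; 1, 0, 0]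

noncomputable def L2 : Matrix (Fin 3) (Fin 3) ℝ :=
  (1 / Real.sqrt 2) • !![0, 1, 0; 1, 0, 0; 0, 0, 0]

noncomputable def L3 : Matrix (Fin 3) (Fin 3) ℝ :=
  (1 / Real.sqrt 2) • !![0, 0, 0; 0, 0, 1; 0, 1, 0]

noncomputable def L4 : Matrix (Fin 3) (Fin 3) ℝ :=
  (1 / Real.sqrt 6) • !![-1, 0, 0; 0, -1, 0; 0, 0, 2]

noncomputable def L5 : Matrix (Fin 3) (Fin 3) ℝ :=
  (1 / Real.sqrt 2) • !![1, 0, 0; 0, -1, 0; 0, 0, 0]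

noncomputable def Q (v1 v2 v3 θ : ℝ) : Matrix (Fin 3) (Fin 3) ℝ :=
  (1 / Real.sqrt 2) •
    (v1 • (Real.cos (2 * θ) • L5 + Real.sin (2 * θ) • L2) + v2 • L4
      + v3 • (Real.cos θ • L1 + Real.sin θ • L3))

noncomputable def Rot (θ : ℝ) : Matrix (Fin 3) (Fin 3) ℝ :=
  !![Real.cos θ, -Real.sin θ, 0; Real.sin θ, Real.cos θ, 0; 0, 0, 1]

lemma rot_transpose (θ : ℝ) :
    (Rot θ)ᵀ = !![Real.cos θ, Real.sin θ, 0; -Real.sin θ, Real.cos θ, 0; 0, 0, 1] := by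
  ext i j; fin_cases i <;> fin_cases j <;> simp [Rot]

lemma rot_orth (θ : ℝ) : Rot θ * (Rot θ)ᵀ = 1 := by
  rw [rot_transpose]
  ext i j
  fin_cases i <;> fin_cases j <;>
    simp [Rot, Matrix.mul_apply, Fin.sum_univ_three, Matrix.one_apply] <;>
    nlinarith [Real.sin_sq_add_cos_sq θ]

lemma charpoly_conj_orth (P A : Matrix (Fin 3) (Fin 3) ℝ) (h : P * Pᵀ = 1) :
    (P * A * Pᵀ).charpoly = A.charpoly := by
  have hmap : ∀ M N : Matrix (Fin 3) (Fin 3) ℝ,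
      (M * N).map (C : ℝ →+* ℝ[X]) = M.map C * N.map C := fun M N =>
    Matrix.map_mul
  have hdet : (P.map (C : ℝ →+* ℝ[X])).det * ((Pᵀ).map C).det = 1 := by
    rw [← Matrix.det_mul, ← hmap, h]
    simp
  have hcm : charmatrix (P * A * Pᵀ) = P.map C * charmatrix A * (Pᵀ).map C := by
    rw [charmatrix, charmatrix]
    simp only [RingHom.mapMatrix_apply]
    rw [Matrix.mul_sub, Matrix.sub_mul, hmap, hmap, Matrix.mul_assoc, ← hmap, ← hmap]
    congr 1
    rw [← (Matrix.scalar_commute (X : ℝ[X]) (fun r' => Commute.all X r') (P.map C)).eq,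
      Matrix.mul_assoc, ← hmap, h]
    simp
  rw [Matrix.charpoly, Matrix.charpoly, hcm, Matrix.det_mul, Matrix.det_mul]
  calc (P.map C).det * (charmatrix A).det * ((Pᵀ).map C).det
      = (charmatrix A).det * ((P.map C).det * ((Pᵀ).map C).det) := by ring
    _ = (charmatrix A).det := by rw [hdet, mul_one]

/-- `Q(θ) = R_θ · Q(0) · R_θᵀ`; in particular the eigenvalues (the characteristic
polynomial) of `Q(θ)` do not depend on `θ`. -/
theorem Q_conjugation (v1 v2 v3 θ : ℝ) :
    Q v1 v2 v3 θ = Rot θ * Q v1 v2 v3 0 * (Rot θ)ᵀ ∧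
    (Q v1 v2 v3 θ).charpoly = (Q v1 v2 v3 0).charpoly := by
  have h : Q v1 v2 v3 θ = Rot θ * Q v1 v2 v3 0 * (Rot θ)ᵀ := by
    rw [rot_transpose]
    ext i j
    fin_cases i <;> fin_cases j <;>
      simp [Q, L1, L2, L3, L4, L5, Rot, Matrix.mul_apply, Fin.sum_univ_three,
        Real.cos_two_mul, Real.sin_two_mul] <;>
      ring_nf <;>
      (try rw [Real.sin_sq]) <;>
      ring
  exact ⟨h, h ▸ charpoly_conj_orth (Rot θ) (Q v1 v2 v3 0) (rot_orth θ)⟩
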